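/- arXiv:math/0002190 — 2 statements merged into one kernel-verified Lean document; each statement's English description precedes it below -/
import Mathlib

section
/- For every function f ∈ C^{1+λ}(D_R) with f(0) = 0, the estimate ‖f‖ ≤ 6R‖f‖' holds, where ‖f‖ = |f| + (2R)^λ H_λ[f] and ‖f‖' = max{‖∂f‖, ‖∂̄f‖}. -/
open Metric Filter MeasureTheory

noncomputable section

/-- The set of values `|f z|`, `z ∈ D_R`. -/
def supSet (R : ℝ) (f : ℂ → ℂ) : Set ℝ :=
  {y : ℝ | ∃ z ∈ ball (0:ℂ) R, y = ‖f z‖}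

/-- The set of λ-Hölder difference quotients of `f` on `D_R`. -/
def holderSet (R lam : ℝ) (f : ℂ → ℂ) : Set ℝ :=
  {y : ℝ | ∃ z w : ℂ, z ∈ ball (0:ℂ) R ∧ z + w ∈ ball (0:ℂ) R ∧ w ≠ 0 ∧
    y = ‖f (z + w) - f z‖ / ‖w‖ ^ lam}

/-- `|f| = sup_{D_R} |f|`. -/
def supAbs (R : ℝ) (f : ℂ → ℂ) : ℝ := sSup (supSet R f)

/-- The Hölder seminorm `H_λ[f]`. -/
def holderSemi (R lam : ℝ) (f : ℂ → ℂ) : ℝ := sSup (holderSet R lam f)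

/-- The λ-Hölder norm `‖f‖ = |f| + (2R)^λ H_λ[f]`. -/
def holderNorm (R lam : ℝ) (f : ℂ → ℂ) : ℝ :=
  supAbs R f + (2*R) ^ lam * holderSemi R lam f

/-- Membership in `C^λ(D_R)`: the quantities entering the norm are finite. -/
def MemClam (R lam : ℝ) (f : ℂ → ℂ) : Prop :=
  BddAbove (supSet R f) ∧ BddAbove (holderSet R lam f)

/-- The Wirtinger derivative `∂f = (∂_x f - i ∂_y f)/2`. -/
def wirt (f : ℂ → ℂ) (z : ℂ) : ℂ :=
  (fderiv ℝ f z 1 - Complex.I * fderiv ℝ f z Complex.I) / 2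

/-- The Wirtinger derivative `∂̄f = (∂_x f + i ∂_y f)/2`. -/
def wirtBar (f : ℂ → ℂ) (z : ℂ) : ℂ :=
  (fderiv ℝ f z 1 + Complex.I * fderiv ℝ f z Complex.I) / 2

lemma fderiv_eq_wirt (f : ℂ → ℂ) (z w : ℂ) :
    fderiv ℝ f z w = wirt f z * w + wirtBar f z * (starRingEnd ℂ) w := by
  obtain ⟨x, y, rfl⟩ : ∃ x y : ℝ, w = (x:ℂ) + (y:ℂ) * Complex.I :=
    ⟨w.re, w.im, (Complex.re_add_im w).symm⟩
  have h1 : fderiv ℝ f z ((x:ℂ) + (y:ℂ) * Complex.I)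
      = (x : ℂ) * fderiv ℝ f z 1 + (y : ℂ) * fderiv ℝ f z Complex.I := by
    rw [show ((x : ℂ) + (y : ℂ) * Complex.I) = x • (1:ℂ) + y • Complex.I by
      simp [Complex.real_smul]]
    rw [map_add, ContinuousLinearMap.map_smul, ContinuousLinearMap.map_smul]
    simp [Complex.real_smul]
  have h2 : (starRingEnd ℂ) ((x:ℂ) + (y:ℂ) * Complex.I) = (x:ℂ) - (y:ℂ) * Complex.I := by
    simp [map_add, map_mul, Complex.conj_I]; ring
  rw [h1, h2]
  unfold wirt wirtBar
  set a := fderiv ℝ f z 1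
  set b := fderiv ℝ f z Complex.I
  linear_combination ((y : ℂ) * b) * Complex.I_mul_I

/-- the estimate `‖f‖ ≤ 6R‖f‖'` for `f ∈ C^{1+λ}_•(D_R)`,
i.e. `f ∈ C^{1+λ}(D_R)` with `f(0) = 0`, where
`‖f‖' = max {‖∂f‖, ‖∂̄f‖}`. -/
theorem stmt7 (R lam : ℝ) (hR : 0 < R) (hlam : lam ∈ Set.Ioo (0:ℝ) 1)
    (f : ℂ → ℂ) (hf0 : f 0 = 0) (hdiff : DifferentiableOn ℝ f (ball 0 R))
    (h1 : MemClam R lam (wirt f)) (h2 : MemClam R lam (wirtBar f)) :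
    holderNorm R lam f
      ≤ 6 * R * max (holderNorm R lam (wirt f)) (holderNorm R lam (wirtBar f)) := by
  obtain ⟨hlam0, hlam1⟩ := hlam
  set M := max (holderNorm R lam (wirt f)) (holderNorm R lam (wirtBar f)) with hM
  have hball0 : (0:ℂ) ∈ ball (0:ℂ) R := by simpa using hR
  have h2R : (0:ℝ) < 2 * R := by linarith
  have hpow_pos : (0:ℝ) < (2*R) ^ lam := Real.rpow_pos_of_pos h2R lam
  -- generic facts
  have hsemi_nonneg : ∀ g : ℂ → ℂ, BddAbove (holderSet R lam g) → 0 ≤ holderSemi R lam g := by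
    intro g hb
    have hw0 : ((R/2 : ℝ) : ℂ) ≠ 0 := by
      simp only [ne_eq, Complex.ofReal_eq_zero]; intro h; linarith
    have hmem : ‖g ((0:ℂ) + ((R/2:ℝ):ℂ)) - g 0‖
        / ‖((R/2:ℝ):ℂ)‖ ^ lam ∈ holderSet R lam g := by
      refine ⟨0, ((R/2:ℝ):ℂ), hball0, ?_, hw0, rfl⟩
      simp only [zero_add, mem_ball, dist_zero_right, Complex.norm_real, Real.norm_eq_abs]
      rw [abs_of_pos (by linarith)]; linarith
    exact le_trans (by positivity) (le_csSup hb hmem)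
  have hsupAbs_le : ∀ g : ℂ → ℂ, BddAbove (supSet R g) →
      ∀ z ∈ ball (0:ℂ) R, ‖g z‖ ≤ supAbs R g := by
    intro g hb z hz
    exact le_csSup hb ⟨z, hz, rfl⟩
  have hsup1 : supAbs R (wirt f) ≤ M := by
    calc supAbs R (wirt f)
        ≤ holderNorm R lam (wirt f) := by
          have := hsemi_nonneg (wirt f) h1.2
          unfold holderNorm; nlinarith
      _ ≤ M := le_max_left _ _
  have hsup2 : supAbs R (wirtBar f) ≤ M := by
    calc supAbs R (wirtBar f)
        ≤ holderNorm R lam (wirtBar f) := by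
          have := hsemi_nonneg (wirtBar f) h2.2
          unfold holderNorm; nlinarith
      _ ≤ M := le_max_right _ _
  have hMnn : 0 ≤ M := by
    have h0 : (0:ℝ) ≤ ‖wirt f 0‖ := norm_nonneg _
    have := hsupAbs_le (wirt f) h1.1 0 hball0
    linarith
  -- derivative bound
  have hC : ∀ z ∈ ball (0:ℂ) R, ‖fderiv ℝ f z‖ ≤ 2 * M := by
    intro z hz
    refine ContinuousLinearMap.opNorm_le_bound _ (by linarith) fun w => ?_
    rw [fderiv_eq_wirt]
    calc ‖wirt f z * w + wirtBar f z * (starRingEnd ℂ) w‖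
        ≤ ‖wirt f z * w‖ + ‖wirtBar f z * (starRingEnd ℂ) w‖ := norm_add_le _ _
      _ = ‖wirt f z‖ * ‖w‖ + ‖wirtBar f z‖ * ‖w‖ := by
          simp [norm_mul]
      _ ≤ M * ‖w‖ + M * ‖w‖ := by
          have hn : (0:ℝ) ≤ ‖w‖ := norm_nonneg w
          have e1 := le_trans (hsupAbs_le (wirt f) h1.1 z hz) hsup1
          have e2 := le_trans (hsupAbs_le (wirtBar f) h2.1 z hz) hsup2
          have := mul_le_mul_of_nonneg_right e1 hn
          have := mul_le_mul_of_nonneg_right e2 hn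
          linarith
      _ = 2 * M * ‖w‖ := by ring
  have hlip : ∀ x ∈ ball (0:ℂ) R, ∀ y ∈ ball (0:ℂ) R, ‖f y - f x‖ ≤ 2 * M * ‖y - x‖ := by
    intro x hx y hy
    exact Convex.norm_image_sub_le_of_norm_fderiv_le
      (fun u hu => hdiff.differentiableAt (isOpen_ball.mem_nhds hu))
      hC (convex_ball (0:ℂ) R) hx hy
  -- bound on supAbs f
  have hsupf : supAbs R f ≤ 2 * M * R := by
    refine Real.sSup_le (fun y hy => ?_) (by positivity)
    obtain ⟨z, hz, rfl⟩ := hy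
    have hz' : ‖z‖ < R := by simpa [mem_ball, dist_zero_right] using hz
    have := hlip 0 hball0 z hz
    rw [hf0, sub_zero, sub_zero] at this
    calc ‖f z‖ = ‖f z‖ := rfl
      _ ≤ 2 * M * ‖z‖ := this
      _ ≤ 2 * M * R := by
          have : ‖z‖ ≤ R := le_of_lt hz'
          nlinarith [norm_nonneg z]
  -- bound on holderSemi f
  have hsemif : holderSemi R lam f ≤ 2 * M * (2*R) ^ (1 - lam) := by
    refine Real.sSup_le (fun y hy => ?_) (by positivity)
    obtain ⟨z, w, hz, hzw, hw0, rfl⟩ := hy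
    have hwpos : 0 < ‖w‖ := norm_pos_iff.mpr hw0
    rw [div_le_iff₀ (Real.rpow_pos_of_pos hwpos lam)]
    have hΔ : ‖f (z + w) - f z‖ ≤ 2 * M * ‖w‖ := by
      have := hlip z hz (z + w) hzw
      simpa [add_sub_cancel_left] using this
    have hwle : ‖w‖ ≤ 2 * R := by
      have hz' : ‖z‖ < R := by simpa [mem_ball, dist_zero_right] using hz
      have hzw' : ‖z + w‖ < R := by simpa [mem_ball, dist_zero_right] using hzw
      calc ‖w‖ = ‖(z + w) - z‖ := by norm_num
        _ ≤ ‖z + w‖ + ‖z‖ := norm_sub_le _ _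
        _ ≤ R + R := add_le_add (le_of_lt hzw') (le_of_lt hz')
        _ = 2 * R := by ring
    have hsplit : ‖w‖ = ‖w‖ ^ lam * ‖w‖ ^ (1 - lam) := by
      rw [← Real.rpow_add hwpos, show lam + (1 - lam) = 1 by ring, Real.rpow_one]
    have hrw : ‖w‖ ^ (1 - lam) ≤ (2*R) ^ (1 - lam) :=
      Real.rpow_le_rpow (norm_nonneg _) hwle (by linarith)
    calc ‖f (z + w) - f z‖ ≤ 2 * M * ‖w‖ := hΔ
      _ = 2 * M * (‖w‖ ^ lam * ‖w‖ ^ (1 - lam)) := by rw [← hsplit]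
      _ = 2 * M * ‖w‖ ^ (1 - lam) * ‖w‖ ^ lam := by ring
      _ ≤ 2 * M * (2*R) ^ (1 - lam) * ‖w‖ ^ lam := by
          have hwl : (0:ℝ) ≤ ‖w‖ ^ lam := Real.rpow_nonneg (norm_nonneg _) lam
          have := mul_le_mul_of_nonneg_right
            (mul_le_mul_of_nonneg_left hrw (by linarith : (0:ℝ) ≤ 2 * M)) hwl
          calc 2 * M * ‖w‖ ^ (1 - lam) * ‖w‖ ^ lam
              = 2 * M * (‖w‖ ^ (1 - lam)) * ‖w‖ ^ lam := by ring
            _ ≤ 2 * M * ((2*R) ^ (1 - lam)) * ‖w‖ ^ lam := this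
            _ = 2 * M * (2*R) ^ (1 - lam) * ‖w‖ ^ lam := by ring
  calc holderNorm R lam f = supAbs R f + (2*R) ^ lam * holderSemi R lam f := rfl
    _ ≤ 2 * M * R + (2*R) ^ lam * (2 * M * (2*R) ^ (1 - lam)) := by
        have := mul_le_mul_of_nonneg_left hsemif hpow_pos.le
        linarith
    _ = 2 * M * R + 2 * M * ((2*R) ^ lam * (2*R) ^ (1 - lam)) := by ring
    _ = 2 * M * R + 2 * M * (2*R) := by
        rw [← Real.rpow_add h2R, show lam + (1 - lam) = 1 by ring, Real.rpow_one]
    _ = 6 * R * M := by ring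
end
end

section
/- For all integers l, m ≥ 0 and k ∈ ℤ₊, the operator T_k applied to the monomial w ↦ w^l w̄^m on D_R satisfies: T_k(w^l w̄^m) = w^l w̄^{m+1}/(m+1) if l < k+m+2, and T_k(w^l w̄^m) = w^l w̄^{m+1}/(m+1) − (R^{2(m+1)}/(m+1)) w^{l−m−1} if l ≥ k+m+2. -/
open Metric Filter MeasureTheory

noncomputable section

/-- The Cauchy operator
`Tf(w) = (1/2πi) ∬_{D_R} f(ζ)/(ζ-w) dζ∧dζ̄ = (-1/π) ∫_{D_R} f(ζ)/(ζ-w) dA`. -/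
def cauchyT (R : ℝ) (f : ℂ → ℂ) (w : ℂ) : ℂ :=
  (-1 / (Real.pi : ℂ)) * ∫ ζ in ball (0:ℂ) R, f ζ / (ζ - w)

/-- Iterated Wirtinger derivative `∂^s`. -/
def wirtIter : ℕ → (ℂ → ℂ) → (ℂ → ℂ)
  | 0, f => f
  | s+1, f => wirt (wirtIter s f)

/-- The operator `T_k f(w) = Tf(w) - ∑_{s=0}^k (1/s!) ∂^s Tf(0) w^s`. -/
def cauchyTk (R : ℝ) (k : ℕ) (f : ℂ → ℂ) (w : ℂ) : ℂ :=
  cauchyT R f w -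
    ∑ s ∈ Finset.range (k+1),
      (1 / (s.factorial : ℂ)) * wirtIter s (cauchyT R f) 0 * w ^ s

/-- The operator `T_∞ = lim_{k→∞} T_k`. -/
def cauchyTinf (R : ℝ) (f : ℂ → ℂ) : ℂ → ℂ :=
  fun w => limUnder atTop fun k => cauchyTk R k f w

open Complex Real Set

lemma axis_null : volume {q : ℝ × ℝ | q.2 = 0} = 0 := by
  have : {q : ℝ × ℝ | q.2 = 0} = (univ : Set ℝ) ×ˢ ({0} : Set ℝ) := by
    ext ⟨a,b⟩; simp [eq_comm]
  rw [this, Measure.volume_eq_prod, Measure.prod_prod, Real.volume_singleton, mul_zero]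

lemma cps_eq (p : ℝ × ℝ) :
    Complex.polarCoord.symm p = Complex.measurableEquivRealProd.symm (polarCoord.symm p) := rfl

lemma habs (q : ℝ × ℝ) : ‖Complex.measurableEquivRealProd.symm q‖
    = √(q.1 ^ 2 + q.2 ^ 2) := by
  rw [Complex.measurableEquivRealProd_symm_apply, Complex.norm_def, Complex.normSq_mk]
  ring_nf

lemma polar_img (R : ℝ) (hR : 0 < R) :
    polarCoord.symm '' (Ioo (0:ℝ) R ×ˢ Ioo (-π) π)
      =ᵐ[volume] Complex.measurableEquivRealProd.symm ⁻¹' (ball (0:ℂ) R) := by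
  set s := Ioo (0:ℝ) R ×ˢ Ioo (-π) π with hs
  set B := Complex.measurableEquivRealProd.symm ⁻¹' (ball (0:ℂ) R) with hB
  have hsub : s ⊆ polarCoord.target := by
    rw [polarCoord_target]
    exact Set.prod_mono Ioo_subset_Ioi_self (le_refl _)
  have himg : polarCoord.symm '' s = polarCoord.source ∩ polarCoord ⁻¹' s :=
    polarCoord.symm_image_eq_source_inter_preimage hsub
  have hmemB : ∀ q : ℝ × ℝ, q ∈ B ↔ √(q.1 ^ 2 + q.2 ^ 2) < R := by
    intro q
    simp only [hB, Set.mem_preimage, mem_ball, Complex.dist_eq, sub_zero, ← habs q]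
  have h1 : polarCoord.symm '' s ⊆ B := by
    rintro x ⟨p, hp, rfl⟩
    rw [hmemB, ← habs, ← cps_eq, Complex.norm_polarCoord_symm,
      abs_of_pos (hp.1.1 : (0:ℝ) < p.1)]
    exact hp.1.2
  have h2 : B \ polarCoord.symm '' s ⊆ {q : ℝ × ℝ | q.2 = 0} := by
    rintro q ⟨hqB, hq⟩
    by_contra hq2
    apply hq
    rw [himg]
    have hsrc : q ∈ polarCoord.source := Or.inr hq2
    have htgt := polarCoord.map_source hsrc
    rw [polarCoord_target] at htgt
    refine ⟨hsrc, ?_⟩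
    have h1' : (polarCoord q).1 < R := by
      have : (polarCoord q).1 = √(q.1 ^ 2 + q.2 ^ 2) := rfl
      rw [this]
      exact (hmemB q).1 hqB
    exact ⟨⟨htgt.1, h1'⟩, htgt.2⟩
  rw [Filter.eventuallyEq_set]
  rw [MeasureTheory.ae_iff]
  apply measure_mono_null _ axis_null
  intro q hq
  simp only [Set.mem_setOf_eq] at hq
  by_cases h : q ∈ B
  · rcases Classical.em (q ∈ polarCoord.symm '' s) with h' | h'
    · exact absurd (iff_of_true h' h) hq
    · exact h2 ⟨h, h'⟩
  · rcases Classical.em (q ∈ polarCoord.symm '' s) with h' | h'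
    · exact absurd (h1 h') h
    · exact absurd (iff_of_false h' h) hq

lemma det_polar (p : ℝ × ℝ) :
    (LinearMap.toContinuousLinearMap (Matrix.toLin (Module.Basis.finTwoProd ℝ) (Module.Basis.finTwoProd ℝ)
      !![Real.cos p.2, -p.1 * Real.sin p.2; Real.sin p.2, p.1 * Real.cos p.2])).det = p.1 := by
  conv_rhs => rw [← one_mul p.1, ← Real.cos_sq_add_sin_sq p.2]
  simp only [neg_mul, LinearMap.det_toContinuousLinearMap, LinearMap.det_toLin,
    Matrix.det_fin_two_of, sub_neg_eq_add]
  ring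

lemma polar_integrableOn_iff {E : Type*} [NormedAddCommGroup E] [NormedSpace ℝ E]
    (f : ℂ → E) (R : ℝ) (hR : 0 < R) :
    IntegrableOn (fun p : ℝ × ℝ => p.1 • f (Complex.polarCoord.symm p))
        (Ioo (0:ℝ) R ×ˢ Ioo (-π) π)
      ↔ IntegrableOn f (ball (0:ℂ) R) := by
  set s := Ioo (0:ℝ) R ×ˢ Ioo (-π) π with hs
  have hsub : s ⊆ polarCoord.target := by
    rw [polarCoord_target]
    exact Set.prod_mono Ioo_subset_Ioi_self (le_refl _)
  have hmeas : MeasurableSet s := measurableSet_Ioo.prod measurableSet_Ioo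
  set g : ℝ × ℝ → E := f ∘ Complex.measurableEquivRealProd.symm with hg
  have step1 : IntegrableOn g (polarCoord.symm '' s)
      ↔ IntegrableOn (fun p : ℝ × ℝ => p.1 • g (polarCoord.symm p)) s := by
    rw [integrableOn_image_iff_integrableOn_abs_det_fderiv_smul volume hmeas
      (fun p _ => (hasFDerivAt_polarCoord_symm p).hasFDerivWithinAt)
      (polarCoord.symm.injOn.mono hsub) g]
    apply integrableOn_congr_fun _ hmeas
    intro p hp
    dsimp only
    rw [fderivPolarCoordSymm, det_polar, abs_of_pos (hp.1.1 : (0:ℝ) < p.1)]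
  have step2 : IntegrableOn g (polarCoord.symm '' s)
      ↔ IntegrableOn g (Complex.measurableEquivRealProd.symm ⁻¹' (ball (0:ℂ) R)) := by
    unfold IntegrableOn
    rw [Measure.restrict_congr_set (polar_img R hR)]
  have step3 : IntegrableOn g (Complex.measurableEquivRealProd.symm ⁻¹' (ball (0:ℂ) R))
      ↔ IntegrableOn f (ball (0:ℂ) R) :=
    (Complex.volume_preserving_equiv_real_prod.symm).integrableOn_comp_preimage
      (MeasurableEquiv.measurableEmbedding _)
  rw [← step3, ← step2, step1]
  rfl

lemma polar_setIntegral {E : Type*} [NormedAddCommGroup E] [NormedSpace ℝ E]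
    (f : ℂ → E) (R : ℝ) (hR : 0 < R) :
    ∫ z in ball (0:ℂ) R, f z
      = ∫ p in Ioo (0:ℝ) R ×ˢ Ioo (-π) π, p.1 • f (Complex.polarCoord.symm p) := by
  set s := Ioo (0:ℝ) R ×ˢ Ioo (-π) π with hs
  have hsub : s ⊆ polarCoord.target := by
    rw [polarCoord_target]
    exact Set.prod_mono Ioo_subset_Ioi_self (le_refl _)
  have hmeas : MeasurableSet s := measurableSet_Ioo.prod measurableSet_Ioo
  set g : ℝ × ℝ → E := f ∘ Complex.measurableEquivRealProd.symm with hg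
  have step1 : ∫ p in polarCoord.symm '' s, g p
      = ∫ p in s, |(LinearMap.toContinuousLinearMap (Matrix.toLin (Module.Basis.finTwoProd ℝ)
          (Module.Basis.finTwoProd ℝ) !![Real.cos p.2, -p.1 * Real.sin p.2;
            Real.sin p.2, p.1 * Real.cos p.2])).det| • g (polarCoord.symm p) :=
    integral_image_eq_integral_abs_det_fderiv_smul volume hmeas
      (fun p _ => (hasFDerivAt_polarCoord_symm p).hasFDerivWithinAt)
      (polarCoord.symm.injOn.mono hsub) g
  have step1' : ∫ p in s, |(LinearMap.toContinuousLinearMap (Matrix.toLin (Module.Basis.finTwoProd ℝ)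
          (Module.Basis.finTwoProd ℝ) !![Real.cos p.2, -p.1 * Real.sin p.2;
            Real.sin p.2, p.1 * Real.cos p.2])).det| • g (polarCoord.symm p)
      = ∫ p in s, p.1 • g (polarCoord.symm p) := by
    apply setIntegral_congr_fun hmeas
    intro p hp
    dsimp only
    rw [det_polar, abs_of_pos (hp.1.1 : (0:ℝ) < p.1)]
  have step2 : ∫ p in polarCoord.symm '' s, g p
      = ∫ p in Complex.measurableEquivRealProd.symm ⁻¹' (ball (0:ℂ) R), g p :=
    setIntegral_congr_set (polar_img R hR)
  have step3 : ∫ p in Complex.measurableEquivRealProd.symm ⁻¹' (ball (0:ℂ) R), g p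
      = ∫ z in ball (0:ℂ) R, f z :=
    (Complex.volume_preserving_equiv_real_prod.symm).setIntegral_preimage_emb
      (MeasurableEquiv.measurableEmbedding _) f _
  rw [← step3, ← step2, step1, step1']
  rfl

lemma J1 (r : ℝ) (w : ℂ) (hw : ‖w‖ < r) (n : ℕ) :
    (∮ z in C(0, r), z ^ n / (z - w)) = 2 * Real.pi * Complex.I * w ^ n := by
  have h : (fun z : ℂ => z ^ n / (z - w)) = fun z => (z - w)⁻¹ • z ^ n := by
    funext z; rw [smul_eq_mul, div_eq_inv_mul]
  rw [h]
  have := (Differentiable.diffContOnCl (𝕜 := ℂ) (f := fun z : ℂ => z ^ n)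
      (differentiable_pow n)).circleIntegral_sub_inv_smul (c := 0) (R := r) (w := w)
      (by simpa [mem_ball, Complex.dist_eq] using hw)
  rw [this]; rw [smul_eq_mul]

lemma J2 (r : ℝ) (hr : 0 ≤ r) (w : ℂ) (hw : r < ‖w‖) (n : ℕ) :
    (∮ z in C(0, r), z ^ n / (z - w)) = 0 := by
  have hball : ∀ z ∈ closedBall (0:ℂ) r, z ≠ w := by
    intro z hz
    simp only [mem_closedBall, dist_zero_right] at hz
    intro h; rw [h] at hz; exact absurd (lt_of_lt_of_le hw hz) (lt_irrefl _)
  apply Complex.circleIntegral_eq_zero_of_differentiable_on_off_countable hr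
    (Set.countable_empty) (f := fun z => z ^ n / (z - w))
  · intro z hz
    exact ((continuous_pow n).continuousAt.continuousWithinAt).div
      ((continuous_id.sub continuous_const).continuousAt.continuousWithinAt)
      (sub_ne_zero.2 (hball z hz))
  · intro z hz
    exact (differentiableAt_pow n).div ((differentiableAt_id.sub (differentiableAt_const w)))
      (sub_ne_zero.2 (hball z (ball_subset_closedBall hz.1)))

lemma sphere_ne (r : ℝ) (hr : 0 < r) (w : ℂ) (hwr : ‖w‖ ≠ r) :
    ∀ z ∈ sphere (0:ℂ) r, z ≠ 0 ∧ z ≠ w := by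
  intro z hz
  simp only [mem_sphere, Complex.dist_eq, sub_zero] at hz
  constructor
  · intro h; rw [h] at hz; simp at hz; exact absurd hz.symm (ne_of_gt hr)
  · intro h; rw [h] at hz; exact hwr hz

lemma ci_inv (r : ℝ) (hr : 0 < r) (w : ℂ) (hwr : ‖w‖ ≠ r) :
    CircleIntegrable (fun z => (z - w)⁻¹) 0 r := by
  rw [circleIntegrable_sub_inv_iff]
  right
  simp only [mem_sphere, Complex.dist_eq, sub_zero, abs_of_pos hr]
  exact hwr

lemma ci_zpow (r : ℝ) (hr : 0 < r) (n : ℤ) :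
    CircleIntegrable (fun z : ℂ => z ^ n) 0 r := by
  have : (fun z : ℂ => z ^ n) = fun z : ℂ => (z - 0) ^ n := by funext z; rw [sub_zero]
  rw [this, circleIntegrable_sub_zpow_iff]
  right; right
  simp [abs_of_pos hr, hr.ne, hr.ne']

lemma ci_main (r : ℝ) (hr : 0 < r) (w : ℂ) (hwr : ‖w‖ ≠ r) (n : ℤ) :
    CircleIntegrable (fun z : ℂ => z ^ n / (z - w)) 0 r := by
  apply ContinuousOn.circleIntegrable hr.le
  intro z hz
  obtain ⟨hz0, hzw⟩ := sphere_ne r hr w hwr z hz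
  exact ((continuousAt_zpow₀ _ _ (Or.inl hz0)).continuousWithinAt).div
    ((continuous_id.sub continuous_const).continuousAt.continuousWithinAt)
    (sub_ne_zero.2 hzw)

lemma CircleIntegrable.cmul {f : ℂ → ℂ} {c : ℂ} {R : ℝ} (h : CircleIntegrable f c R)
    (a : ℂ) : CircleIntegrable (fun z => a * f z) c R := by
  unfold CircleIntegrable at h ⊢
  simpa using h.const_mul a

lemma Jinv (r : ℝ) (hr : 0 < r) (w : ℂ) (hwr : ‖w‖ ≠ r) :
    (∮ z in C(0, r), (z - w)⁻¹) = if ‖w‖ < r then 2 * Real.pi * Complex.I else 0 := by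
  rcases lt_or_gt_of_ne hwr with h | h
  · rw [if_pos h]
    exact circleIntegral.integral_sub_inv_of_mem_ball (by simpa [mem_ball, Complex.dist_eq] using h)
  · rw [if_neg (not_lt.2 h.le)]
    have := J2 r hr.le w h 0
    simpa using this

lemma J0 (r : ℝ) (hr : 0 < r) :
    (∮ z in C(0, r), z⁻¹) = 2 * Real.pi * Complex.I := by
  have : (fun z : ℂ => z⁻¹) = fun z : ℂ => (z - 0)⁻¹ := by funext z; rw [sub_zero]
  rw [this]
  exact circleIntegral.integral_sub_inv_of_mem_ball (by simpa [mem_ball] using hr)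

lemma ci_inv0 (r : ℝ) (hr : 0 < r) : CircleIntegrable (fun z : ℂ => z⁻¹) 0 r := by
  have : (fun z : ℂ => z⁻¹) = fun z : ℂ => (z - 0)⁻¹ := by funext z; rw [sub_zero]
  rw [this, circleIntegrable_sub_inv_iff]
  right
  simp [abs_of_pos hr, hr.ne, hr.ne']

lemma J3 (r : ℝ) (hr : 0 < r) (w : ℂ) (hw0 : w ≠ 0) (hwr : ‖w‖ ≠ r) (p : ℕ) (hp : 1 ≤ p) :
    (∮ z in C(0, r), z ^ (-(p:ℤ)) / (z - w))
      = if ‖w‖ < r then 0 else -(2 * Real.pi * Complex.I) * w ^ (-(p:ℤ)) := by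
  induction p, hp using Nat.le_induction with
  | base =>
    have heq : Set.EqOn (fun z : ℂ => z ^ (-(1:ℕ):ℤ) / (z - w))
        (fun z => w⁻¹ * ((z - w)⁻¹ - z⁻¹)) (sphere 0 r) := by
      intro z hz
      obtain ⟨hz0, hzw⟩ := sphere_ne r hr w hwr z hz
      have hzw' : z - w ≠ 0 := sub_ne_zero.2 hzw
      simp only [Nat.cast_one, zpow_neg_one]
      field_simp
      ring
    rw [circleIntegral.integral_congr hr.le heq, circleIntegral.integral_const_mul,
      circleIntegral.integral_sub (ci_inv r hr w hwr) (ci_inv0 r hr),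
      Jinv r hr w hwr, J0 r hr]
    rcases lt_or_gt_of_ne hwr with h | h
    · rw [if_pos h, if_pos h]; ring
    · rw [if_neg (not_lt.2 h.le), if_neg (not_lt.2 h.le)]
      rw [show (-(1:ℕ):ℤ) = -1 by norm_num, zpow_neg_one]
      field_simp
      ring
  | succ p hp ih =>
    have heq : Set.EqOn (fun z : ℂ => z ^ (-((p:ℤ)+1)) / (z - w))
        (fun z => w⁻¹ * (z ^ (-(p:ℤ)) / (z - w)) - w⁻¹ * z ^ (-((p:ℤ)+1))) (sphere 0 r) := by
      intro z hz
      obtain ⟨hz0, hzw⟩ := sphere_ne r hr w hwr z hz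
      have hzw' : z - w ≠ 0 := sub_ne_zero.2 hzw
      have h1 : z ^ (-((p:ℤ)+1)) = z ^ (-(p:ℤ)) * z⁻¹ := by
        rw [← zpow_neg_one, ← zpow_add₀ hz0]; ring_nf
      simp only [h1]
      set a := z ^ (-(p:ℤ)) with ha
      field_simp
      ring
    have hcast : (-((p:ℕ)+1:ℕ):ℤ) = -((p:ℤ)+1) := by push_cast; ring
    rw [hcast, circleIntegral.integral_congr hr.le heq,
      circleIntegral.integral_sub
        (((ci_main r hr w hwr (-(p:ℤ)))).cmul _)
        ((ci_zpow r hr (-((p:ℤ)+1))).cmul _),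
      circleIntegral.integral_const_mul, circleIntegral.integral_const_mul, ih]
    have hz2 : (∮ z in C(0, r), z ^ (-((p:ℤ)+1))) = 0 := by
      have : (fun z : ℂ => z ^ (-((p:ℤ)+1))) = fun z : ℂ => (z - 0) ^ (-((p:ℤ)+1)) := by
        funext z; rw [sub_zero]
      rw [this]
      apply circleIntegral.integral_sub_zpow_of_ne
      omega
    rw [hz2, mul_zero, sub_zero]
    rcases lt_or_gt_of_ne hwr with h | h
    · rw [if_pos h, if_pos h]; ring
    · rw [if_neg (not_lt.2 h.le), if_neg (not_lt.2 h.le)]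
      have : w ^ (-((p:ℤ)+1)) = w ^ (-(p:ℤ)) * w⁻¹ := by
        rw [← zpow_neg_one, ← zpow_add₀ hw0]; ring_nf
      rw [this]; ring


-- kernel integrability
lemma K0_int (r : ℝ) (hr : 0 < r) : IntegrableOn (fun ζ : ℂ => ‖ζ‖⁻¹) (ball (0:ℂ) r) := by
  rw [← polar_integrableOn_iff _ r hr]
  have hmeas : MeasurableSet (Ioo (0:ℝ) r ×ˢ Ioo (-π) π) :=
    measurableSet_Ioo.prod measurableSet_Ioo
  apply (integrableOn_congr_fun (g := fun _ => (1:ℝ)) ?_ hmeas).2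
  · refine integrableOn_const ?_
    rw [Measure.volume_eq_prod, Measure.prod_prod]
    exact (ENNReal.mul_lt_top measure_Ioo_lt_top measure_Ioo_lt_top).ne
  · intro p hp
    have h1 : (0:ℝ) < p.1 := hp.1.1
    dsimp only
    rw [Complex.norm_polarCoord_symm, abs_of_pos h1,
      smul_eq_mul, mul_inv_cancel₀ h1.ne']

lemma Kw_int (r : ℝ) (hr : 0 < r) (w : ℂ) :
    IntegrableOn (fun ζ : ℂ => ‖ζ - w‖⁻¹) (ball w r) := by
  have h := (measurePreserving_add_right (volume : Measure ℂ) w).integrableOn_comp_preimage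
    (MeasurableEquiv.addRight w).measurableEmbedding
    (f := fun ζ : ℂ => ‖ζ - w‖⁻¹) (s := ball w r)
  rw [← h]
  have hpre : (fun x : ℂ => x + w) ⁻¹' ball w r = ball 0 r := by
    ext x; simp [mem_ball, Complex.dist_eq]
  rw [hpre]
  have : ((fun ζ : ℂ => ‖ζ - w‖⁻¹) ∘ fun x => x + w) = fun ζ : ℂ => ‖ζ‖⁻¹ := by
    funext x; simp
  rw [this]
  exact K0_int r hr

lemma F_int (R : ℝ) (hR : 0 < R) (l m : ℕ) (w : ℂ) (hw : ‖w‖ < R) :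
    IntegrableOn (fun ζ : ℂ => ζ^l * (starRingEnd ℂ) ζ^m / (ζ - w)) (ball (0:ℂ) R) := by
  have hker : IntegrableOn (fun ζ : ℂ => ‖ζ - w‖⁻¹) (ball (0:ℂ) R) := by
    apply (Kw_int (2*R) (by linarith) w).mono_set
    intro ζ hζ
    rw [mem_ball, Complex.dist_eq] at hζ ⊢
    calc ‖ζ - w‖ ≤ ‖ζ‖ + ‖w‖ := by
          simpa using norm_sub_le ζ w
      _ < R + R := by
          apply add_lt_add _ hw
          simpa using hζ
      _ = 2 * R := by ring
  apply Integrable.mono' (hker.const_mul (R^(l+m)))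
  · apply Measurable.aestronglyMeasurable
    apply Measurable.div
    · exact (measurable_id.pow_const l).mul
        ((Complex.continuous_conj).measurable.pow_const m)
    · exact measurable_id.sub_const w
  · apply (ae_restrict_iff' measurableSet_ball).2
    apply ae_of_all
    intro ζ hζ
    rw [mem_ball, Complex.dist_eq, sub_zero] at hζ
    have h1 : ‖ζ^l * (starRingEnd ℂ) ζ^m‖ ≤ R^(l+m) := by
      rw [norm_mul, norm_pow, norm_pow,
        Complex.norm_conj, pow_add]
      apply mul_le_mul (pow_le_pow_left₀ (norm_nonneg ζ) hζ.le l)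
        (pow_le_pow_left₀ (norm_nonneg ζ) hζ.le m)
        (pow_nonneg (norm_nonneg ζ) m) (pow_nonneg (le_trans (norm_nonneg ζ) hζ.le) l)
    calc ‖ζ^l * (starRingEnd ℂ) ζ^m / (ζ - w)‖
        = ‖ζ^l * (starRingEnd ℂ) ζ^m‖ * ‖ζ - w‖⁻¹ := by rw [norm_div, div_eq_mul_inv]
      _ ≤ R^(l+m) * ‖ζ - w‖⁻¹ :=
          mul_le_mul_of_nonneg_right h1 (inv_nonneg.2 (norm_nonneg _))

-- pointwise polar/circle identity
lemma pt_id (l m : ℕ) (w : ℂ) (r : ℝ) (hr : 0 < r) (hrw : ‖w‖ ≠ r) (θ : ℝ) :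
    (r:ℝ) • ((Complex.polarCoord.symm (r, θ))^l
        * (starRingEnd ℂ) (Complex.polarCoord.symm (r, θ))^m / (Complex.polarCoord.symm (r, θ) - w))
      = ((r:ℂ)^(2*m+1)/Complex.I)
          * (deriv (circleMap 0 r) θ
              • ((circleMap 0 r θ) ^ ((l:ℤ)-m-1) / (circleMap 0 r θ - w))) := by
  have hsymm : Complex.polarCoord.symm (r, θ) = circleMap 0 r θ := by
    rw [Complex.polarCoord_symm_apply, circleMap, Complex.exp_mul_I,
      ← Complex.ofReal_cos, ← Complex.ofReal_sin]
    ring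
  set z := circleMap 0 r θ with hzdef
  have hz0 : z ≠ 0 := circleMap_ne_center hr.ne'
  have habsz : ‖z‖ = r := by
    rw [hzdef, norm_circleMap_zero, abs_of_pos hr]
  have hzw : z - w ≠ 0 := by
    intro h
    rw [sub_eq_zero] at h
    exact hrw (by rw [← h, habsz])
  have hconj : (starRingEnd ℂ) z = (r:ℂ)^2 / z := by
    have := Complex.mul_conj z
    rw [Complex.normSq_eq_norm_sq, habsz] at this
    field_simp at this ⊢
    rw [mul_comm] at this
    push_cast
    push_cast at this; rw [← this]; ring
  have hzpow : z ^ ((l:ℤ)-m-1) = z^l / z^m / z := by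
    have : ((l:ℤ)-m-1) = (l:ℤ) - (m:ℤ) - (1:ℤ) := by push_cast; ring
    rw [this, zpow_sub₀ hz0, zpow_sub₀ hz0, zpow_natCast, zpow_natCast, zpow_one]
  rw [hsymm, deriv_circleMap, hconj, hzpow, smul_eq_mul]
  rw [show ((r:ℝ) • (z^l * ((r:ℂ)^2/z)^m / (z - w))) = (r:ℂ) * (z^l * ((r:ℂ)^2/z)^m / (z - w)) by
    rw [Complex.real_smul]]
  have hrC : (r:ℂ) ≠ 0 := Complex.ofReal_ne_zero.2 hr.ne'
  field_simp
  ring_nf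
  rw [← hzdef, inv_pow, mul_assoc _ (z ^ m), mul_inv_cancel₀ (pow_ne_zero m hz0), mul_one]

lemma inner_eval (l m : ℕ) (w : ℂ) (r : ℝ) (hr : 0 < r) (hrw : ‖w‖ ≠ r) :
    ∫ θ in Ioo (-π) π, (r:ℝ) • ((Complex.polarCoord.symm (r, θ))^l
        * (starRingEnd ℂ) (Complex.polarCoord.symm (r, θ))^m
        / (Complex.polarCoord.symm (r, θ) - w))
      = ((r:ℂ)^(2*m+1)/Complex.I) * (∮ z in C(0, r), z ^ ((l:ℤ)-m-1) / (z - w)) := by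
  simp only [pt_id l m w r hr hrw]
  rw [MeasureTheory.integral_const_mul]
  congr 1
  have hG : Function.Periodic (fun θ => deriv (circleMap 0 r) θ
      • ((circleMap 0 r θ) ^ ((l:ℤ)-m-1) / (circleMap 0 r θ - w))) (2*π) := by
    intro θ
    simp [(periodic_circleMap 0 r) θ]
  have hper := hG.intervalIntegral_add_eq (-π) 0
  have h2 : -π + 2*π = π := by ring
  rw [h2, zero_add] at hper
  rw [← MeasureTheory.integral_Ioc_eq_integral_Ioo,
    ← intervalIntegral.integral_of_le (by linarith [Real.pi_pos] : -π ≤ π), hper]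
  rfl

lemma split_Ioo (a R : ℝ) (h0 : 0 ≤ a) (hR : a < R) : Ioc 0 a ∪ Ioo a R = Ioo 0 R := by
  ext x
  simp only [Set.mem_union, Set.mem_Ioc, Set.mem_Ioo]
  constructor
  · rintro (⟨h1, h2⟩ | ⟨h1, h2⟩) <;> constructor <;> linarith
  · rintro ⟨h1, h2⟩
    rcases le_or_gt x a with h | h
    · exact Or.inl ⟨h1, h⟩
    · exact Or.inr ⟨h, h2⟩

lemma ioc_disj (a R : ℝ) : Disjoint (Ioc 0 a) (Ioo a R) := by
  rw [Set.disjoint_left]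
  rintro x ⟨_, h2⟩ ⟨h3, _⟩
  linarith

lemma ae_ne_abs (a : ℝ) : ∀ᵐ r : ℝ ∂volume, r ≠ a := by
  rw [MeasureTheory.ae_iff]
  have : {r : ℝ | ¬ r ≠ a} = {a} := by ext x; simp
  rw [this]
  exact Real.volume_singleton

lemma pow_integral (a b : ℝ) (hab : a ≤ b) (n : ℕ) :
    ∫ r in Ioo a b, ((r:ℂ))^n = (((b^(n+1) - a^(n+1))/(n+1) : ℝ) : ℂ) := by
  rw [← MeasureTheory.integral_Ioc_eq_integral_Ioo,
    ← intervalIntegral.integral_of_le hab]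
  simp only [← Complex.ofReal_pow]
  rw [intervalIntegral.integral_ofReal, integral_pow]

lemma outer_A (R : ℝ) (hR : 0 < R) (l m : ℕ) (hlm : m + 1 ≤ l) (w : ℂ)
    (hw : ‖w‖ < R) :
    ∫ ζ in ball (0:ℂ) R, ζ^l * (starRingEnd ℂ) ζ^m / (ζ - w)
      = (Real.pi : ℂ) * w^(l-m-1)
          * ((R:ℂ)^(2*(m+1)) - ((‖w‖ : ℂ))^(2*(m+1))) / ((m:ℂ)+1) := by
  set q := l - m - 1 with hq
  set a := ‖w‖ with ha
  have ha0 : 0 ≤ a := norm_nonneg w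
  have hcast : ((l:ℤ) - m - 1) = (q:ℤ) := by rw [hq]; omega
  set vfun : ℝ → ℂ := fun r => if r ≤ a then 0 else (2*π) * w^q * (r:ℂ)^(2*m+1) with hvfun
  have heq0 : Set.EqOn vfun (fun _ => (0:ℂ)) (Ioc 0 a) := by
    intro r hr
    simp only [hvfun]
    rw [if_pos hr.2]
  have heq1 : Set.EqOn vfun (fun r : ℝ => (2*π) * w^q * (r:ℂ)^(2*m+1)) (Ioo a R) := by
    intro r hr
    simp only [hvfun]
    rw [if_neg (not_le.2 hr.1)]
  rw [polar_setIntegral _ R hR, Measure.volume_eq_prod, setIntegral_prod]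
  · have h1 : ∫ r in Ioo (0:ℝ) R, (∫ θ in Ioo (-π) π, ((r:ℝ) •
        ((Complex.polarCoord.symm (r, θ))^l * (starRingEnd ℂ) (Complex.polarCoord.symm (r, θ))^m
          / (Complex.polarCoord.symm (r, θ) - w))))
        = ∫ r in Ioo (0:ℝ) R, vfun r := by
      apply setIntegral_congr_ae measurableSet_Ioo
      filter_upwards [ae_ne_abs a] with r hra hr
      rw [inner_eval l m w r hr.1 (fun h => hra (h ▸ rfl))]
      rcases lt_or_gt_of_ne hra with hlt | hgt
      · have hJ : (∮ z in C(0, r), z ^ ((l:ℤ)-m-1) / (z - w)) = 0 := by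
          rw [show (fun z : ℂ => z ^ ((l:ℤ)-m-1) / (z - w))
              = fun z : ℂ => z ^ q / (z - w) by
            funext z; rw [hcast, zpow_natCast]]
          exact J2 r hr.1.le w hlt q
        rw [hJ, mul_zero]
        simp only [hvfun]
        rw [if_pos hlt.le]
      · have hJ : (∮ z in C(0, r), z ^ ((l:ℤ)-m-1) / (z - w))
            = 2 * Real.pi * Complex.I * w ^ q := by
          rw [show (fun z : ℂ => z ^ ((l:ℤ)-m-1) / (z - w))
              = fun z : ℂ => z ^ q / (z - w) by
            funext z; rw [hcast, zpow_natCast]]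
          exact J1 r w hgt q
        rw [hJ]
        simp only [hvfun]
        rw [if_neg (not_le.2 hgt)]
        have hI : Complex.I ≠ 0 := Complex.I_ne_zero
        field_simp
    rw [h1]
    have h2 : ∫ r in Ioo (0:ℝ) R, vfun r
        = (∫ r in Ioc (0:ℝ) a, vfun r) + ∫ r in Ioo a R, vfun r := by
      rw [← split_Ioo a R ha0 hw]
      apply setIntegral_union (ioc_disj a R) measurableSet_Ioo
      · exact (integrableOn_congr_fun heq0 measurableSet_Ioc).2 integrableOn_zero
      · apply (integrableOn_congr_fun heq1 measurableSet_Ioo).2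
        exact ((continuous_const.mul (Complex.continuous_ofReal.pow _)).integrableOn_Ioc).mono_set
          Set.Ioo_subset_Ioc_self
    have h3 : ∫ r in Ioc (0:ℝ) a, vfun r = 0 := by
      rw [setIntegral_congr_fun measurableSet_Ioc heq0]
      exact integral_zero _ _
    rw [h2, h3, zero_add, setIntegral_congr_fun measurableSet_Ioo heq1,
      MeasureTheory.integral_const_mul, pow_integral a R hw.le (2*m+1)]
    have hm1 : ((m:ℂ)+1) ≠ 0 := Nat.cast_add_one_ne_zero m
    have hm2 : ((2*m+1+1 : ℕ) : ℂ) ≠ 0 := Nat.cast_ne_zero.2 (by omega)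
    push_cast at hm2 ⊢
    field_simp
    ring
  · rw [← Measure.volume_eq_prod]
    exact (polar_integrableOn_iff
      (fun ζ : ℂ => ζ^l * (starRingEnd ℂ) ζ^m / (ζ - w)) R hR).2 (F_int R hR l m w hw)

lemma outer_B0 (R : ℝ) (hR : 0 < R) (l m : ℕ) (hlm : l ≤ m) :
    ∫ ζ in ball (0:ℂ) R, ζ^l * (starRingEnd ℂ) ζ^m / (ζ - 0)
      = -(Real.pi:ℂ) * ((0:ℂ)^l * (starRingEnd ℂ) (0:ℂ)^(m+1)) / ((m:ℂ)+1) := by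
  have hrhs : -(Real.pi:ℂ) * ((0:ℂ)^l * (starRingEnd ℂ) (0:ℂ)^(m+1)) / ((m:ℂ)+1) = 0 := by
    rw [map_zero, zero_pow (Nat.succ_ne_zero m), mul_zero, mul_zero, zero_div]
  rw [hrhs, polar_setIntegral _ R hR, Measure.volume_eq_prod, setIntegral_prod]
  · have h1 : ∫ r in Ioo (0:ℝ) R, (∫ θ in Ioo (-π) π, ((r:ℝ) •
        ((Complex.polarCoord.symm (r, θ))^l * (starRingEnd ℂ) (Complex.polarCoord.symm (r, θ))^m
          / (Complex.polarCoord.symm (r, θ) - 0))))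
        = ∫ r in Ioo (0:ℝ) R, (0:ℂ) := by
      apply setIntegral_congr_ae measurableSet_Ioo
      filter_upwards with r hr
      rw [inner_eval l m 0 r hr.1 (by simpa using hr.1.ne)]
      have hJ : (∮ z in C(0, r), z ^ ((l:ℤ)-m-1) / (z - 0)) = 0 := by
        have heq : Set.EqOn (fun z : ℂ => z ^ ((l:ℤ)-m-1) / (z - 0))
            (fun z : ℂ => (z - 0) ^ ((l:ℤ)-m-1-1)) (sphere (0:ℂ) r) := by
          intro z hz
          obtain ⟨hz0, -⟩ := sphere_ne r hr.1 0 (by simpa using hr.1.ne) z hz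
          simp only [sub_zero]
          rw [show z ^ ((l:ℤ)-m-1-1) = z ^ ((l:ℤ)-m-1) / z ^ (1:ℤ) from zpow_sub₀ hz0 _ _,
            zpow_one]
        rw [circleIntegral.integral_congr hr.1.le heq]
        exact circleIntegral.integral_sub_zpow_of_ne (by omega) _ _ _
      rw [hJ, mul_zero]
    rw [h1]
    simp
  · rw [← Measure.volume_eq_prod]
    exact (polar_integrableOn_iff
      (fun ζ : ℂ => ζ^l * (starRingEnd ℂ) ζ^m / (ζ - 0)) R hR).2
      (F_int R hR l m 0 (by simpa using hR))

lemma outer_B (R : ℝ) (hR : 0 < R) (l m : ℕ) (hlm : l ≤ m) (w : ℂ)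
    (hw : ‖w‖ < R) :
    ∫ ζ in ball (0:ℂ) R, ζ^l * (starRingEnd ℂ) ζ^m / (ζ - w)
      = -(Real.pi:ℂ) * (w^l * (starRingEnd ℂ) w^(m+1)) / ((m:ℂ)+1) := by
  rcases eq_or_ne w 0 with rfl | hw0
  · exact outer_B0 R hR l m hlm
  set p := m + 1 - l with hp
  have hp1 : 1 ≤ p := by omega
  have hcast : ((l:ℤ) - m - 1) = -(p:ℤ) := by rw [hp]; omega
  set a := ‖w‖ with ha
  have ha0 : 0 < a := by
    rw [ha]
    exact norm_pos_iff.2 hw0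
  set c : ℂ := (-2*π) * w^(-(p:ℤ)) with hc
  set vfun : ℝ → ℂ := fun r => if r ≤ a then c * (r:ℂ)^(2*m+1) else 0 with hvfun
  have heq0 : Set.EqOn vfun (fun r : ℝ => c * (r:ℂ)^(2*m+1)) (Ioc 0 a) := by
    intro r hr
    simp only [hvfun]
    rw [if_pos hr.2]
  have heq1 : Set.EqOn vfun (fun _ => (0:ℂ)) (Ioo a R) := by
    intro r hr
    simp only [hvfun]
    rw [if_neg (not_le.2 hr.1)]
  rw [polar_setIntegral _ R hR, Measure.volume_eq_prod, setIntegral_prod]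
  · have h1 : ∫ r in Ioo (0:ℝ) R, (∫ θ in Ioo (-π) π, ((r:ℝ) •
        ((Complex.polarCoord.symm (r, θ))^l * (starRingEnd ℂ) (Complex.polarCoord.symm (r, θ))^m
          / (Complex.polarCoord.symm (r, θ) - w))))
        = ∫ r in Ioo (0:ℝ) R, vfun r := by
      apply setIntegral_congr_ae measurableSet_Ioo
      filter_upwards [ae_ne_abs a] with r hra hr
      rw [inner_eval l m w r hr.1 (fun h => hra (h ▸ rfl))]
      have hJeq : (fun z : ℂ => z ^ ((l:ℤ)-m-1) / (z - w))
          = fun z : ℂ => z ^ (-(p:ℤ)) / (z - w) := by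
        funext z; rw [hcast]
      rw [hJeq, J3 r hr.1 w hw0 (fun h => hra (h ▸ rfl)) p hp1]
      rcases lt_or_gt_of_ne hra with hlt | hgt
      · rw [if_neg (not_lt.2 hlt.le)]
        simp only [hvfun]
        rw [if_pos hlt.le, hc]
        have hI : Complex.I ≠ 0 := Complex.I_ne_zero
        field_simp
      · rw [if_pos hgt, mul_zero]
        simp only [hvfun]
        rw [if_neg (not_le.2 hgt)]
    rw [h1]
    have h2 : ∫ r in Ioo (0:ℝ) R, vfun r
        = (∫ r in Ioc (0:ℝ) a, vfun r) + ∫ r in Ioo a R, vfun r := by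
      rw [← split_Ioo a R ha0.le hw]
      apply setIntegral_union (ioc_disj a R) measurableSet_Ioo
      · apply (integrableOn_congr_fun heq0 measurableSet_Ioc).2
        exact (continuous_const.mul (Complex.continuous_ofReal.pow _)).integrableOn_Ioc
      · exact (integrableOn_congr_fun heq1 measurableSet_Ioo).2 integrableOn_zero
    have h3 : ∫ r in Ioo a R, vfun r = 0 := by
      rw [setIntegral_congr_fun measurableSet_Ioo heq1]
      exact integral_zero _ _
    rw [h2, h3, add_zero, setIntegral_congr_fun measurableSet_Ioc heq0,
      MeasureTheory.integral_const_mul, MeasureTheory.integral_Ioc_eq_integral_Ioo,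
      pow_integral 0 a ha0.le (2*m+1), hc]
    have hm1 : ((m:ℂ)+1) ≠ 0 := Nat.cast_add_one_ne_zero m
    have hm2 : ((2*m+1+1 : ℕ) : ℂ) ≠ 0 := Nat.cast_ne_zero.2 (by omega)
    have habs2 : ((a:ℂ))^2 = w * (starRingEnd ℂ) w := by
      rw [Complex.mul_conj, Complex.normSq_eq_norm_sq]
      push_cast
      ring
    have e3' : ((a:ℂ))^(2*m+1+1) = w^p * (w^l * (starRingEnd ℂ) w^(m+1)) := by
      rw [show 2*m+1+1 = 2*(m+1) by ring, pow_mul, habs2, mul_pow,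
        show m+1 = p + l by omega, pow_add]
      ring
    have hwp : w^p ≠ 0 := pow_ne_zero p hw0
    push_cast at hm2 ⊢
    rw [zero_pow (by omega : 2*m+1+1 ≠ 0), sub_zero, e3']
    simp only [zpow_neg, zpow_natCast]
    field_simp
    ring
  · rw [← Measure.volume_eq_prod]
    exact (polar_integrableOn_iff
      (fun ζ : ℂ => ζ^l * (starRingEnd ℂ) ζ^m / (ζ - w)) R hR).2 (F_int R hR l m w hw)

lemma cauchyT_eq (R : ℝ) (hR : 0 < R) (l m : ℕ) (w : ℂ) (hw : w ∈ ball (0:ℂ) R) :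
    cauchyT R (fun ζ => ζ^l * (starRingEnd ℂ) ζ^m) w
      = w^l * (starRingEnd ℂ) w^(m+1) / ((m:ℂ)+1)
        - (if m+1 ≤ l then ((R:ℂ)^(2*(m+1))/((m:ℂ)+1)) * w^(l-m-1) else 0) := by
  have hw' : ‖w‖ < R := by simpa [mem_ball, Complex.dist_eq] using hw
  have hπ : (Real.pi : ℂ) ≠ 0 := Complex.ofReal_ne_zero.2 Real.pi_ne_zero
  have hm1 : ((m:ℂ)+1) ≠ 0 := Nat.cast_add_one_ne_zero m
  rw [show cauchyT R (fun ζ => ζ^l * (starRingEnd ℂ) ζ^m) w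
      = (-1 / (Real.pi:ℂ)) * ∫ ζ in ball (0:ℂ) R, ζ^l * (starRingEnd ℂ) ζ^m / (ζ - w) from rfl]
  rcases le_or_gt (m+1) l with hlm | hlm
  · rw [if_pos hlm, outer_A R hR l m hlm w hw']
    have habs : ((‖w‖ : ℂ))^(2*(m+1)) = w^(m+1) * (starRingEnd ℂ) w^(m+1) := by
      rw [pow_mul]
      rw [show ((‖w‖ : ℂ))^2 = w * (starRingEnd ℂ) w by
        rw [Complex.mul_conj, Complex.normSq_eq_norm_sq]; push_cast; ring]
      rw [mul_pow]
    have hql : w^(l-m-1) * w^(m+1) = w^l := by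
      rw [← pow_add]; congr 1; omega
    rw [habs]
    field_simp
    linear_combination (starRingEnd ℂ) w^(m+1) * hql
  · rw [if_neg (not_le.2 hlm), outer_B R hR l m (by omega) w hw', sub_zero]
    field_simp

lemma hasFDerivAt_mono (C : ℂ) (a b : ℕ) (z : ℂ) :
    HasFDerivAt (fun w : ℂ => C * (w^a * (starRingEnd ℂ) w^b))
      (C • ((z^a • (((ContinuousLinearMap.smulRight (1 : ℂ →L[ℂ] ℂ)
            ((b:ℂ) * ((starRingEnd ℂ) z)^(b-1))).restrictScalars ℝ).comp
            (Complex.conjCLE : ℂ ≃L[ℝ] ℂ).toContinuousLinearMap))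
        + ((starRingEnd ℂ) z^b) • ((ContinuousLinearMap.smulRight (1 : ℂ →L[ℂ] ℂ)
            ((a:ℂ) * z^(a-1))).restrictScalars ℝ))) z := by
  have hpow : HasFDerivAt (fun w : ℂ => w^a)
      ((ContinuousLinearMap.smulRight (1 : ℂ →L[ℂ] ℂ) ((a:ℂ) * z^(a-1))).restrictScalars ℝ) z :=
    ((hasDerivAt_pow a z).hasFDerivAt).restrictScalars ℝ
  have hconj : HasFDerivAt (fun w : ℂ => (starRingEnd ℂ) w)
      (Complex.conjCLE : ℂ ≃L[ℝ] ℂ).toContinuousLinearMap z :=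
    Complex.conjCLE.hasFDerivAt
  have hpow2 : HasFDerivAt (fun u : ℂ => u^b)
      ((ContinuousLinearMap.smulRight (1 : ℂ →L[ℂ] ℂ)
        ((b:ℂ) * ((starRingEnd ℂ) z)^(b-1))).restrictScalars ℝ) ((starRingEnd ℂ) z) :=
    ((hasDerivAt_pow b _).hasFDerivAt).restrictScalars ℝ
  have hcb := hpow2.comp z hconj
  exact (hpow.mul hcb).const_mul C

lemma wirt_monomial (C : ℂ) (a b : ℕ) (z : ℂ) :
    wirt (fun w : ℂ => C * (w^a * (starRingEnd ℂ) w^b)) z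
      = C * ((a:ℂ) * z^(a-1) * (starRingEnd ℂ) z^b) := by
  have h := hasFDerivAt_mono C a b z
  rw [wirt, h.fderiv]
  simp only [ContinuousLinearMap.add_apply, ContinuousLinearMap.smul_apply,
    ContinuousLinearMap.coe_restrictScalars', ContinuousLinearMap.smulRight_apply,
    ContinuousLinearMap.one_apply, ContinuousLinearMap.coe_comp', Function.comp_apply,
    ContinuousLinearEquiv.coe_coe, Complex.conjCLE_apply, map_one, Complex.conj_I,
    smul_eq_mul]
  ring_nf
  simp only [Complex.I_sq]
  ring

lemma diff_monomial (C : ℂ) (a b : ℕ) (z : ℂ) :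
    DifferentiableAt ℝ (fun w : ℂ => C * (w^a * (starRingEnd ℂ) w^b)) z :=
  (hasFDerivAt_mono C a b z).differentiableAt

lemma wirt_sub {f g : ℂ → ℂ} {z : ℂ} (hf : DifferentiableAt ℝ f z)
    (hg : DifferentiableAt ℝ g z) :
    wirt (fun w => f w - g w) z = wirt f z - wirt g z := by
  unfold wirt
  rw [fderiv_fun_sub hf hg]
  simp only [ContinuousLinearMap.coe_sub', Pi.sub_apply]
  ring

lemma wirtIter_pair (C1 C2 : ℂ) (a b c d : ℕ) : ∀ s : ℕ,
    wirtIter s (fun w : ℂ => C1 * (w^a * (starRingEnd ℂ) w^b)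
        - C2 * (w^c * (starRingEnd ℂ) w^d))
      = fun z => (C1 * (a.descFactorial s : ℂ)) * (z^(a-s) * (starRingEnd ℂ) z^b)
          - (C2 * (c.descFactorial s : ℂ)) * (z^(c-s) * (starRingEnd ℂ) z^d)
  | 0 => by
    funext z
    simp [wirtIter]
  | s+1 => by
    funext z
    rw [show wirtIter (s+1) (fun w : ℂ => C1 * (w^a * (starRingEnd ℂ) w^b)
        - C2 * (w^c * (starRingEnd ℂ) w^d))
      = wirt (wirtIter s (fun w : ℂ => C1 * (w^a * (starRingEnd ℂ) w^b)
        - C2 * (w^c * (starRingEnd ℂ) w^d))) from rfl]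
    rw [wirtIter_pair C1 C2 a b c d s]
    rw [wirt_sub (diff_monomial _ _ _ _) (diff_monomial _ _ _ _),
      wirt_monomial, wirt_monomial, Nat.descFactorial_succ, Nat.descFactorial_succ]
    push_cast
    rw [show a - s - 1 = a - (s+1) from by omega, show c - s - 1 = c - (s+1) from by omega]
    ring

lemma wirtIter_congr {f g : ℂ → ℂ} {s : Set ℂ} (hs : IsOpen s) (h : ∀ z ∈ s, f z = g z) :
    ∀ k : ℕ, ∀ z ∈ s, wirtIter k f z = wirtIter k g z
  | 0, z, hz => h z hz
  | k+1, z, hz => by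
    rw [show wirtIter (k+1) f = wirt (wirtIter k f) from rfl,
      show wirtIter (k+1) g = wirt (wirtIter k g) from rfl]
    have hev : wirtIter k f =ᶠ[nhds z] wirtIter k g := by
      filter_upwards [hs.mem_nhds hz] with x hx using wirtIter_congr hs h k x hx
    unfold wirt
    rw [hev.fderiv_eq]

lemma wirtIter_zero_val (C1 C2 : ℂ) (l m q : ℕ) (s : ℕ) :
    wirtIter s (fun w : ℂ => C1 * (w^l * (starRingEnd ℂ) w^(m+1))
        - C2 * (w^q * (starRingEnd ℂ) w^0)) 0
      = if s = q then -C2 * (q.factorial : ℂ) else 0 := by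
  rw [show wirtIter s (fun w : ℂ => C1 * (w^l * (starRingEnd ℂ) w^(m+1))
        - C2 * (w^q * (starRingEnd ℂ) w^0)) 0
      = (C1 * (l.descFactorial s : ℂ)) * ((0:ℂ)^(l-s) * (starRingEnd ℂ) (0:ℂ)^(m+1))
          - (C2 * (q.descFactorial s : ℂ)) * ((0:ℂ)^(q-s) * (starRingEnd ℂ) (0:ℂ)^0)
    from congrFun (wirtIter_pair C1 C2 l (m+1) q 0 s) 0]
  rw [map_zero, zero_pow (Nat.succ_ne_zero m), mul_zero, mul_zero, zero_sub, pow_zero, mul_one]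
  rcases lt_trichotomy s q with hlt | rfl | hgt
  · rw [if_neg (Nat.ne_of_lt hlt), zero_pow (by omega : q - s ≠ 0), mul_zero, neg_zero]
  · rw [if_pos rfl, Nat.sub_self, pow_zero, mul_one, Nat.descFactorial_self, neg_mul]
  · rw [if_neg (Nat.ne_of_gt hgt), Nat.descFactorial_eq_zero_iff_lt.2 hgt]
    simp

lemma sum_wirtIter (C1 C2 : ℂ) (l m q k : ℕ) (w : ℂ) :
    ∑ s ∈ Finset.range (k+1), (1/(s.factorial:ℂ)) * wirtIter s
        (fun w : ℂ => C1 * (w^l * (starRingEnd ℂ) w^(m+1))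
          - C2 * (w^q * (starRingEnd ℂ) w^0)) 0 * w^s
      = if q ≤ k then -C2 * w^q else 0 := by
  have h1 : ∀ s ∈ Finset.range (k+1), (1/(s.factorial:ℂ)) * wirtIter s
        (fun w : ℂ => C1 * (w^l * (starRingEnd ℂ) w^(m+1))
          - C2 * (w^q * (starRingEnd ℂ) w^0)) 0 * w^s
      = if s = q then (1/(s.factorial:ℂ)) * (-C2 * (q.factorial : ℂ)) * w^s else 0 := by
    intro s _
    rw [wirtIter_zero_val]
    rcases eq_or_ne s q with rfl | hne
    · rw [if_pos rfl, if_pos rfl]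
    · rw [if_neg hne, if_neg hne, mul_zero, zero_mul]
  rw [Finset.sum_congr rfl h1, Finset.sum_ite_eq' (Finset.range (k+1)) q
    (fun s => (1/(s.factorial:ℂ)) * (-C2 * (q.factorial : ℂ)) * w^s)]
  have hq : (q ∈ Finset.range (k+1)) ↔ q ≤ k := by
    rw [Finset.mem_range]; omega
  have hfac : ((q.factorial : ℂ)) ≠ 0 := Nat.cast_ne_zero.2 (Nat.factorial_ne_zero q)
  rcases le_or_gt q k with hle | hgt
  · rw [if_pos (hq.2 hle), if_pos hle]
    field_simp
  · rw [if_neg (fun hmem => absurd (hq.1 hmem) (not_le.2 hgt)), if_neg (not_le.2 hgt)]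


/-- the action of `T_k` on monomials `w^l w̄^m` (Lemma 4). -/
theorem stmt10 (R : ℝ) (hR : 0 < R) (l m k : ℕ) (w : ℂ) (hw : w ∈ ball (0:ℂ) R) :
    (l < k + m + 2 →
      cauchyTk R k (fun ζ => ζ ^ l * (starRingEnd ℂ) ζ ^ m) w
        = w ^ l * (starRingEnd ℂ) w ^ (m+1) / ((m : ℂ) + 1)) ∧
    (k + m + 2 ≤ l →
      cauchyTk R k (fun ζ => ζ ^ l * (starRingEnd ℂ) ζ ^ m) w
        = w ^ l * (starRingEnd ℂ) w ^ (m+1) / ((m : ℂ) + 1)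
          - ((R : ℂ) ^ (2*(m+1)) / ((m : ℂ) + 1)) * w ^ (l - m - 1)) := by
  set C1 : ℂ := 1/((m:ℂ)+1) with hC1
  set C2 : ℂ := if m+1 ≤ l then ((R:ℂ)^(2*(m+1))/((m:ℂ)+1)) else 0 with hC2
  set q : ℕ := l - m - 1 with hq
  set G : ℂ → ℂ := fun w : ℂ => C1 * (w^l * (starRingEnd ℂ) w^(m+1))
      - C2 * (w^q * (starRingEnd ℂ) w^0) with hG
  have hTG : ∀ z ∈ ball (0:ℂ) R, cauchyT R (fun ζ => ζ^l * (starRingEnd ℂ) ζ^m) z = G z := by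
    intro z hz
    rw [cauchyT_eq R hR l m z hz, hG]
    simp only [pow_zero, mul_one, hC1, hC2, hq]
    rcases le_or_gt (m+1) l with hlm | hlm
    · rw [if_pos hlm, if_pos hlm]
      ring
    · rw [if_neg (not_le.2 hlm), if_neg (not_le.2 hlm)]
      ring
  have hsum : ∀ s ∈ Finset.range (k+1),
      (1 / (s.factorial : ℂ)) * wirtIter s (cauchyT R (fun ζ => ζ^l * (starRingEnd ℂ) ζ^m)) 0 * w^s
      = (1 / (s.factorial : ℂ)) * wirtIter s G 0 * w^s := by
    intro s _
    rw [wirtIter_congr isOpen_ball hTG s 0 (mem_ball_self hR)]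
  have hTk : cauchyTk R k (fun ζ => ζ ^ l * (starRingEnd ℂ) ζ ^ m) w
      = G w - (if q ≤ k then -C2 * w^q else 0) := by
    rw [cauchyTk, Finset.sum_congr rfl hsum, hG]
    rw [sum_wirtIter C1 C2 l m q k w]
    rw [hTG w hw, hG]
  rw [hTk]
  constructor
  · intro hl
    rcases le_or_gt (m+1) l with hlm | hlm
    · have hqk : q ≤ k := by omega
      rw [if_pos hqk, hG]
      simp only [pow_zero, mul_one, hC1]
      ring
    · have hC2z : C2 = 0 := by rw [hC2, if_neg (not_le.2 hlm)]
      rw [hG, hC2z]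
      simp only [pow_zero, mul_one, hC1]
      rcases le_or_gt q k with h | h
      · rw [if_pos h]; ring
      · rw [if_neg (not_le.2 h)]; ring
  · intro hl
    have hqk : ¬ (q ≤ k) := by omega
    have hlm : m+1 ≤ l := by omega
    rw [if_neg hqk, hG, hC2, if_pos hlm]
    simp only [pow_zero, mul_one, hC1]
    ring
end
end
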